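/- arXiv:2312.08999 — 8 statements merged into one kernel-verified Lean document; each statement's English description precedes it below -/
import Mathlib

section
/- Let μ be a probability measure on a measurable space Ω and let X : Ω → (Fin (n+1) → ℝ) be a measurable random vector of non-conformity scores that is exchangeable, i.e., for every permutation σ of Fin (n+1), the pushforward law of ω ↦ X(ω) ∘ σ equals the pushforward law of X. Define the conformal p-value of the test coordinate by p(ω) = (#{i : X(ω)_i ≥ X(ω)_{n+1}}) / (n+1). Then for every ε ∈ [0,1], μ({ω : p(ω) ≤ ε}) ≤ ε. (Conformal validity: the probability that the true label's p-value falls at or below ε, i.e., that the true label is excluded from the prediction set Γ^ε = {y : p^y > ε}, is at most ε.) -/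
open MeasureTheory Finset
open scoped ENNReal

/-- Count of coordinates `j` with `x i ≤ x j`. -/
private noncomputable def rankCount {m : ℕ} (x : Fin m → ℝ) (i : Fin m) : ℕ :=
  (Finset.univ.filter (fun j => x i ≤ x j)).card

private lemma rankCount_measurable {m : ℕ} (i : Fin m) :
    Measurable (fun x : Fin m → ℝ => rankCount x i) := by
  have : (fun x : Fin m → ℝ => rankCount x i)
      = fun x => ∑ j : Fin m, if x i ≤ x j then 1 else 0 := by
    funext x; rw [rankCount, Finset.card_filter]
  rw [this]
  exact Finset.measurable_sum _ fun j _ =>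
    Measurable.ite (measurableSet_le (measurable_pi_apply i) (measurable_pi_apply j))
      measurable_const measurable_const

/-- Composing with a permutation just permutes the count. -/
private lemma rankCount_comp {m : ℕ} (x : Fin m → ℝ) (σ : Equiv.Perm (Fin m)) (i : Fin m) :
    rankCount (x ∘ σ) i = rankCount x (σ i) := by
  unfold rankCount
  apply Finset.card_bij (fun j _ => σ j)
  · intro j hj
    simp only [Finset.mem_filter, Finset.mem_univ, true_and, Function.comp_apply] at hj ⊢
    exact hj
  · intro a ha b hb hab; exact σ.injective hab
  · intro b hb
    refine ⟨σ.symm b, ?_, by simp⟩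
    simp only [Finset.mem_filter, Finset.mem_univ, true_and, Function.comp_apply] at hb ⊢
    simpa using hb

/-- At most `k` coordinates can have rank count `≤ k`. -/
private lemma card_rankCount_le {m : ℕ} (x : Fin m → ℝ) (k : ℕ) :
    (Finset.univ.filter (fun i => rankCount x i ≤ k)).card ≤ k := by
  set S := Finset.univ.filter (fun i => rankCount x i ≤ k) with hS
  rcases S.eq_empty_or_nonempty with h | h
  · simp [h]
  · obtain ⟨i₀, hi₀, hmin⟩ := S.exists_min_image x h
    have hsub : S ⊆ Finset.univ.filter (fun j => x i₀ ≤ x j) := by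
      intro j hj
      simp only [Finset.mem_filter, Finset.mem_univ, true_and]
      exact hmin j hj
    calc S.card ≤ (Finset.univ.filter (fun j => x i₀ ≤ x j)).card := Finset.card_le_card hsub
      _ = rankCount x i₀ := rfl
      _ ≤ k := (Finset.mem_filter.mp hi₀).2

/-- Conformal validity: if the vector of non-conformity scores is exchangeable,
the conformal p-value of the test (last) coordinate is superuniform:
`μ {p ≤ ε} ≤ ε` for every `ε ∈ [0,1]`. -/
theorem conformal_validity
    {Ω : Type*} [MeasurableSpace Ω] (μ : Measure Ω) [IsProbabilityMeasure μ]
    (n : ℕ) (X : Ω → (Fin (n + 1) → ℝ)) (hX : Measurable X)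
    (hexch : ∀ σ : Equiv.Perm (Fin (n + 1)),
      Measure.map (fun ω => X ω ∘ σ) μ = Measure.map X μ)
    (p : Ω → ℝ)
    (hp : ∀ ω, p ω =
      ((Finset.univ.filter (fun i : Fin (n + 1) => X ω (Fin.last n) ≤ X ω i)).card : ℝ)
        / (n + 1))
    (ε : ℝ) (hε0 : 0 ≤ ε) (hε1 : ε ≤ 1) :
    μ {ω | p ω ≤ ε} ≤ ENNReal.ofReal ε := by
  classical
  set k : ℕ := ⌊ε * (n + 1)⌋₊ with hk
  have hεn : (0:ℝ) ≤ ε * (n + 1) := by positivity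
  -- rewrite the event
  have hevent : {ω | p ω ≤ ε} = {ω | rankCount (X ω) (Fin.last n) ≤ k} := by
    ext ω
    simp only [Set.mem_setOf_eq, hp ω]
    have hrc : (Finset.univ.filter (fun i : Fin (n+1) => X ω (Fin.last n) ≤ X ω i)).card
        = rankCount (X ω) (Fin.last n) := rfl
    rw [hrc, div_le_iff₀ (by positivity : (0:ℝ) < (n:ℝ) + 1)]
    constructor
    · intro h
      exact Nat.le_floor (by push_cast at h ⊢; linarith)
    · intro h
      have hfl := Nat.floor_le hεn
      have h2 : (rankCount (X ω) (Fin.last n) : ℝ) ≤ (k:ℝ) := by exact_mod_cast h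
      push_cast at h2 hfl ⊢
      linarith
  -- events A i
  set A : Fin (n+1) → Set Ω := fun i => {ω | rankCount (X ω) i ≤ k} with hA
  have hmeasB : ∀ i : Fin (n+1), MeasurableSet {x : Fin (n+1) → ℝ | rankCount x i ≤ k} := by
    intro i
    have : {x : Fin (n+1) → ℝ | rankCount x i ≤ k}
        = (fun x => rankCount x i) ⁻¹' {m : ℕ | m ≤ k} := rfl
    rw [this]
    exact (rankCount_measurable i) MeasurableSpace.measurableSet_top
  have hmeasA : ∀ i, MeasurableSet (A i) := fun i => hX (hmeasB i)
  -- all A i have the same measure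
  have hAconst : ∀ i : Fin (n+1), μ (A i) = μ (A (Fin.last n)) := by
    intro i
    set σ : Equiv.Perm (Fin (n+1)) := Equiv.swap (Fin.last n) i with hσ
    have hXσ : Measurable (fun ω => X ω ∘ σ) := by
      exact measurable_pi_lambda _ fun j => (measurable_pi_apply (σ j)).comp hX
    have hAi : A i = (fun ω => X ω ∘ σ) ⁻¹' {x | rankCount x (Fin.last n) ≤ k} := by
      ext ω
      simp only [hA, Set.mem_setOf_eq, Set.mem_preimage]
      rw [rankCount_comp, hσ, Equiv.swap_apply_left]
    rw [hAi, ← Measure.map_apply hXσ (hmeasB (Fin.last n)), hexch σ,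
      Measure.map_apply hX (hmeasB (Fin.last n))]
    rfl
  -- sum of measures
  have hsum : ∑ i : Fin (n+1), μ (A i) ≤ (k : ℝ≥0∞) := by
    have h1 : ∀ i : Fin (n+1), μ (A i) = ∫⁻ ω, (A i).indicator (fun _ => (1:ℝ≥0∞)) ω ∂μ := by
      intro i
      rw [lintegral_indicator_const (hmeasA i), one_mul]
    calc ∑ i : Fin (n+1), μ (A i)
        = ∑ i : Fin (n+1), ∫⁻ ω, (A i).indicator (fun _ => (1:ℝ≥0∞)) ω ∂μ := by
          exact Finset.sum_congr rfl fun i _ => h1 i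
      _ = ∫⁻ ω, ∑ i : Fin (n+1), (A i).indicator (fun _ => (1:ℝ≥0∞)) ω ∂μ := by
          rw [lintegral_finset_sum]
          exact fun i _ => (measurable_const.indicator (hmeasA i))
      _ ≤ ∫⁻ _, (k : ℝ≥0∞) ∂μ := by
          apply lintegral_mono
          intro ω
          dsimp only
          have : ∑ i : Fin (n+1), (A i).indicator (fun _ => (1:ℝ≥0∞)) ω
              = ((Finset.univ.filter (fun i => rankCount (X ω) i ≤ k)).card : ℝ≥0∞) := by
            rw [Finset.card_filter]
            push_cast
            apply Finset.sum_congr rfl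
            intro i _
            by_cases h : ω ∈ A i
            · rw [Set.indicator_of_mem h, if_pos (show rankCount (X ω) i ≤ k from h)]
            · rw [Set.indicator_of_notMem h,
                if_neg (show ¬ rankCount (X ω) i ≤ k from h)]
          rw [this]
          exact_mod_cast Nat.cast_le.mpr (card_rankCount_le (X ω) k)
      _ = (k : ℝ≥0∞) := by simp
  have hconst : ∑ i : Fin (n+1), μ (A i) = (n+1 : ℝ≥0∞) * μ (A (Fin.last n)) := by
    rw [Finset.sum_congr rfl fun i _ => hAconst i]
    simp [Finset.card_univ, mul_comm]
  rw [hevent]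
  have hkey : (n+1 : ℝ≥0∞) * μ (A (Fin.last n)) ≤ (k : ℝ≥0∞) := hconst ▸ hsum
  have hkle : (k : ℝ≥0∞) ≤ ENNReal.ofReal ε * (n+1 : ℝ≥0∞) := by
    have : (k:ℝ) ≤ ε * (n+1) := Nat.floor_le hεn
    calc (k : ℝ≥0∞) = ENNReal.ofReal (k:ℝ) := by simp
      _ ≤ ENNReal.ofReal (ε * (n+1)) := ENNReal.ofReal_le_ofReal this
      _ = ENNReal.ofReal ε * ENNReal.ofReal ((n:ℝ)+1) := by
          rw [ENNReal.ofReal_mul hε0]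
      _ = ENNReal.ofReal ε * (n+1 : ℝ≥0∞) := by
          congr 1
          rw [show ((n:ℝ)+1) = ((n+1:ℕ):ℝ) by push_cast; ring, ENNReal.ofReal_natCast]
          push_cast; ring
  have := hkey.trans hkle
  rw [mul_comm (ENNReal.ofReal ε) _] at this
  have hne : ((n:ℝ≥0∞)+1) ≠ 0 := by simp
  have hnt : ((n:ℝ≥0∞)+1) ≠ ⊤ := by simp [ENNReal.add_ne_top]
  exact (ENNReal.mul_le_mul_iff_right hne hnt).mp this
end

section
/- Let μ be a probability measure on a measurable space Ω and let α_1, …, α_{n+1} : Ω → ℝ be measurable random variables that are mutually independent and identically distributed. Define the conformal p-value p(ω) = (#{i ∈ {1,…,n+1} : α_i(ω) ≥ α_{n+1}(ω)}) / (n+1). Then for every ε ∈ [0,1], μ({ω : p(ω) ≤ ε}) ≤ ε. -/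
open MeasureTheory ProbabilityTheory
open scoped ENNReal

namespace ConformalAux

variable {m : ℕ}

/-- count of coordinates at least `x j` -/
noncomputable def S (j : Fin m) (x : Fin m → ℝ) : ℕ :=
  (Finset.univ.filter fun i => x j ≤ x i).card

lemma measurable_S (j : Fin m) : Measurable (S j) := by
  have h : S j = fun x => ∑ i : Fin m, if x j ≤ x i then 1 else 0 := by
    funext x; exact Finset.card_filter _ _
  rw [h]
  exact Finset.measurable_sum _ fun i _ =>
    Measurable.ite (measurableSet_le (measurable_pi_apply j) (measurable_pi_apply i))
      measurable_const measurable_const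

lemma comb (x : Fin m → ℝ) (k : ℕ) :
    (Finset.univ.filter fun j => S j x ≤ k).card ≤ k := by
  set B := Finset.univ.filter fun j => S j x ≤ k with hB
  rcases B.eq_empty_or_nonempty with h | h
  · simp [h]
  · obtain ⟨j0, hj0, hmin⟩ := B.exists_min_image x h
    have hsub : B ⊆ Finset.univ.filter fun i => x j0 ≤ x i := by
      intro j hj
      simp only [Finset.mem_filter, Finset.mem_univ, true_and]
      exact hmin j hj
    calc B.card ≤ S j0 x := Finset.card_le_card hsub
    _ ≤ k := by
        have := Finset.mem_filter.mp hj0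
        exact this.2

lemma S_comp (σ : Equiv.Perm (Fin m)) (j : Fin m) (x : Fin m → ℝ) :
    S j (x ∘ σ) = S (σ j) x := by
  unfold S
  refine Finset.card_equiv σ fun i => ?_
  simp [Function.comp]

lemma pi_map_perm (ν : Measure ℝ) [IsProbabilityMeasure ν] (σ : Equiv.Perm (Fin m)) :
    (Measure.pi fun _ : Fin m => ν).map (fun x => x ∘ σ) = Measure.pi (fun _ => ν) := by
  refine (Measure.pi_eq (μ := fun _ : Fin m => ν) (μ' := (Measure.pi fun _ : Fin m => ν).map (fun x => x ∘ σ)) fun s hs => ?_).symm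
  rw [Measure.map_apply (f := fun x : Fin m → ℝ => x ∘ σ)
    (measurable_pi_lambda _ fun i => measurable_pi_apply (σ i)) (MeasurableSet.univ_pi hs)]
  have hpre : (fun x : Fin m → ℝ => x ∘ σ) ⁻¹' (Set.univ.pi s)
      = Set.univ.pi (fun i => s (σ.symm i)) := by
    ext x
    simp only [Set.mem_preimage, Set.mem_pi, Set.mem_univ, true_implies, Function.comp]
    constructor
    · intro h i; have := h (σ.symm i); simpa using this
    · intro h i; have := h (σ i); simpa using this
  rw [hpre, Measure.pi_pi]
  exact Fintype.prod_equiv σ.symm _ _ fun i => rfl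

lemma joint_eq {Ω : Type*} [MeasurableSpace Ω] (μ : Measure Ω) [IsProbabilityMeasure μ]
    (α : Fin m → Ω → ℝ) (hmeas : ∀ i, Measurable (α i))
    (hindep : iIndepFun α μ) :
    μ.map (fun ω i => α i ω) = Measure.pi (fun i => μ.map (α i)) := by
  haveI : ∀ i, IsProbabilityMeasure (μ.map (α i)) :=
    fun i => Measure.isProbabilityMeasure_map (hmeas i).aemeasurable
  refine (Measure.pi_eq (μ := fun i => μ.map (α i))
    (μ' := μ.map (fun ω i => α i ω)) fun s hs => ?_).symm
  rw [Measure.map_apply (f := fun ω i => α i ω) (measurable_pi_lambda _ hmeas)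
    (MeasurableSet.univ_pi hs)]
  have hpre : (fun ω i => α i ω) ⁻¹' Set.univ.pi s = ⋂ i ∈ Finset.univ, α i ⁻¹' s i := by
    ext ω; simp
  rw [hpre, hindep.measure_inter_preimage_eq_mul Finset.univ (fun i _ => hs i)]
  exact Finset.prod_congr rfl fun i _ => (Measure.map_apply (hmeas i) (hs i)).symm

end ConformalAux

open ConformalAux

/-- Conformal validity for i.i.d. non-conformity scores: if `α 0, …, α n` are
mutually independent and identically distributed, the conformal p-value of the
last score is superuniform: `μ {p ≤ ε} ≤ ε` for every `ε ∈ [0,1]`. -/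
theorem conformal_validity_iid
    {Ω : Type*} [MeasurableSpace Ω] (μ : Measure Ω) [IsProbabilityMeasure μ]
    (n : ℕ) (α : Fin (n + 1) → Ω → ℝ) (hmeas : ∀ i, Measurable (α i))
    (hindep : iIndepFun α μ)
    (hident : ∀ i j : Fin (n + 1), IdentDistrib (α i) (α j) μ μ)
    (p : Ω → ℝ)
    (hp : ∀ ω, p ω =
      ((Finset.univ.filter (fun i : Fin (n + 1) => α (Fin.last n) ω ≤ α i ω)).card : ℝ)
        / (n + 1))
    (ε : ℝ) (hε0 : 0 ≤ ε) (hε1 : ε ≤ 1) :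
    μ {ω | p ω ≤ ε} ≤ ENNReal.ofReal ε := by
  classical
  set T : Ω → (Fin (n + 1) → ℝ) := fun ω i => α i ω with hT
  have hTmeas : Measurable T := measurable_pi_lambda _ hmeas
  set ν : Measure ℝ := μ.map (α (Fin.last n)) with hν
  haveI : IsProbabilityMeasure ν := Measure.isProbabilityMeasure_map (hmeas _).aemeasurable
  have hjoint : μ.map T = Measure.pi (fun _ : Fin (n + 1) => ν) := by
    rw [hT, joint_eq μ α hmeas hindep]
    congr 1
    funext i
    exact (hident i (Fin.last n)).map_eq
  set k : ℕ := ⌊ε * ((n : ℝ) + 1)⌋₊ with hk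
  set A : Fin (n + 1) → Set (Fin (n + 1) → ℝ) := fun j => (S j) ⁻¹' Set.Iic k with hA
  have hAmeas : ∀ j, MeasurableSet (A j) := fun j => (measurable_S j) measurableSet_Iic
  have hpos : (0 : ℝ) < (n : ℝ) + 1 := by positivity
  have hset : {ω | p ω ≤ ε} = T ⁻¹' A (Fin.last n) := by
    ext ω
    simp only [Set.mem_setOf_eq, Set.mem_preimage, hA, Set.mem_Iic, hp ω]
    rw [div_le_iff₀ hpos]
    exact (Nat.le_floor_iff (mul_nonneg hε0 hpos.le)).symm
  set M := (Measure.pi fun _ : Fin (n + 1) => ν) (A (Fin.last n)) with hM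
  have hμ : μ {ω | p ω ≤ ε} = M := by
    rw [hset, ← Measure.map_apply hTmeas (hAmeas _), hjoint]
  have hsym : ∀ j, (Measure.pi fun _ : Fin (n + 1) => ν) (A j) = M := by
    intro j
    have hσ := pi_map_perm (m := n + 1) ν (Equiv.swap j (Fin.last n))
    have hprei : (fun x : Fin (n + 1) → ℝ => x ∘ (Equiv.swap j (Fin.last n))) ⁻¹' (A j)
        = A (Fin.last n) := by
      ext x
      simp only [Set.mem_preimage, hA, Set.mem_Iic, S_comp, Equiv.swap_apply_left]
    calc (Measure.pi fun _ : Fin (n + 1) => ν) (A j)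
        = ((Measure.pi fun _ : Fin (n + 1) => ν).map
            (fun x => x ∘ (Equiv.swap j (Fin.last n)))) (A j) := by rw [hσ]
      _ = M := by
          rw [Measure.map_apply (f := fun x : Fin (n + 1) → ℝ => x ∘ (Equiv.swap j (Fin.last n)))
            (measurable_pi_lambda _ fun i => measurable_pi_apply _) (hAmeas j), hprei]
  have hsum : ∑ j : Fin (n + 1), (Measure.pi fun _ : Fin (n + 1) => ν) (A j)
      ≤ (k : ℝ≥0∞) := by
    calc ∑ j : Fin (n + 1), (Measure.pi fun _ : Fin (n + 1) => ν) (A j)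
        = ∫⁻ x, ∑ j : Fin (n + 1), (A j).indicator (fun _ => (1 : ℝ≥0∞)) x ∂(Measure.pi fun _ : Fin (n + 1) => ν) := by
          rw [lintegral_finset_sum _ fun j _ => measurable_const.indicator (hAmeas j)]
          exact Finset.sum_congr rfl fun j _ => (lintegral_indicator_one (hAmeas j)).symm
      _ ≤ ∫⁻ _, (k : ℝ≥0∞) ∂(Measure.pi fun _ : Fin (n + 1) => ν) := by
          refine lintegral_mono fun x => ?_
          have hcard : ∑ j : Fin (n + 1), (A j).indicator (fun _ => (1 : ℝ≥0∞)) x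
              = ((Finset.univ.filter fun j : Fin (n + 1) => S j x ≤ k).card : ℝ≥0∞) := by
            rw [Finset.card_filter, Nat.cast_sum]
            refine Finset.sum_congr rfl fun j _ => ?_
            by_cases h : S j x ≤ k <;> simp [Set.indicator_apply, hA, Set.mem_Iic, h]
          rw [hcard]
          exact Nat.cast_le.mpr (comb x k)
      _ = (k : ℝ≥0∞) := by simp
  have hfin : ((n + 1 : ℕ) : ℝ≥0∞) * M ≤ (k : ℝ≥0∞) := by
    calc ((n + 1 : ℕ) : ℝ≥0∞) * M
        = ∑ _j : Fin (n + 1), M := by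
          simp [Finset.sum_const, Finset.card_univ, nsmul_eq_mul]
      _ = ∑ j : Fin (n + 1), (Measure.pi fun _ : Fin (n + 1) => ν) (A j) :=
          (Finset.sum_congr rfl fun j _ => (hsym j).symm)
      _ ≤ (k : ℝ≥0∞) := hsum
  have hkle : (k : ℝ≥0∞) ≤ ENNReal.ofReal ε * ((n + 1 : ℕ) : ℝ≥0∞) := by
    have h1 : (k : ℝ) ≤ ε * ((n : ℝ) + 1) := Nat.floor_le (mul_nonneg hε0 hpos.le)
    calc (k : ℝ≥0∞) = ENNReal.ofReal (k : ℝ) := (ENNReal.ofReal_natCast k).symm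
      _ ≤ ENNReal.ofReal (ε * ((n : ℝ) + 1)) := ENNReal.ofReal_le_ofReal h1
      _ = ENNReal.ofReal ε * ENNReal.ofReal ((n : ℝ) + 1) := ENNReal.ofReal_mul hε0
      _ = ENNReal.ofReal ε * ((n + 1 : ℕ) : ℝ≥0∞) := by
          congr 1
          rw [show ((n : ℝ) + 1) = ((n + 1 : ℕ) : ℝ) by push_cast; ring, ENNReal.ofReal_natCast]
  rw [hμ]
  have hc0 : ((n + 1 : ℕ) : ℝ≥0∞) ≠ 0 := by simp
  have hctop : ((n + 1 : ℕ) : ℝ≥0∞) ≠ ⊤ := by simp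
  have := hfin.trans hkle
  rw [mul_comm] at this
  exact (ENNReal.mul_le_mul_iff_left hc0 hctop).mp this
end

section
/- Let N be a positive natural number, a : Fin N → ℝ a family of real non-conformity scores, and k a natural number. Then the number of indices j such that #{i : a_i ≥ a_j} ≤ k is at most k; that is, card {j : card {i : a_i ≥ a_j} ≤ k} ≤ k. -/
/-- Deterministic counting bound, the combinatorial core of conformal validity:
for a family of `N` real scores, at most `k` indices can have rank
`#{i : a i ≥ a j}` at most `k`. -/
theorem rank_count_bound (N : ℕ) (hN : 0 < N) (a : Fin N → ℝ) (k : ℕ) :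
    (Finset.univ.filter (fun j : Fin N =>
      (Finset.univ.filter (fun i : Fin N => a j ≤ a i)).card ≤ k)).card ≤ k := by
  set S := Finset.univ.filter (fun j : Fin N =>
      (Finset.univ.filter (fun i : Fin N => a j ≤ a i)).card ≤ k) with hS
  rcases S.eq_empty_or_nonempty with h | h
  · simp [h]
  · obtain ⟨j0, hj0, hmin⟩ := S.exists_min_image a h
    have hj0' := (Finset.mem_filter.mp hj0).2
    calc S.card ≤ (Finset.univ.filter fun i => a j0 ≤ a i).card := by
          apply Finset.card_le_card
          intro i hi
          simp only [Finset.mem_filter, Finset.mem_univ, true_and]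
          exact hmin i hi
      _ ≤ k := hj0'
end

section
/- Let N be a positive natural number, a : Fin N → ℝ a family of real non-conformity scores, and define the empirical p-value of index j by p_j = (#{i : a_i ≥ a_j}) / N. Then for every ε ∈ [0,1], the number of indices j with p_j ≤ ε is at most ε·N; that is, card {j : p_j ≤ ε} ≤ ε·N. -/
/-- Superuniformity of empirical conformal p-values: for `N` real scores with
p-values `p j = #{i : a i ≥ a j} / N`, at most an `ε`-fraction of indices has
`p j ≤ ε`. -/
theorem empirical_pvalue_superuniform (N : ℕ) (hN : 0 < N) (a : Fin N → ℝ)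
    (ε : ℝ) (hε0 : 0 ≤ ε) (hε1 : ε ≤ 1) :
    ((Finset.univ.filter (fun j : Fin N =>
        ((Finset.univ.filter (fun i : Fin N => a j ≤ a i)).card : ℝ) / N ≤ ε)).card : ℝ)
      ≤ ε * N := by
  set B := Finset.univ.filter (fun j : Fin N =>
      ((Finset.univ.filter (fun i : Fin N => a j ≤ a i)).card : ℝ) / N ≤ ε) with hB
  rcases B.eq_empty_or_nonempty with h | h
  · simp [h]
    positivity
  · obtain ⟨j, hjB, hjmin⟩ := B.exists_min_image a h
    have hsub : B ⊆ Finset.univ.filter (fun i : Fin N => a j ≤ a i) := by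
      intro k hk
      simp only [Finset.mem_filter, Finset.mem_univ, true_and]
      exact hjmin k hk
    have hcard : (B.card : ℝ) ≤
        ((Finset.univ.filter (fun i : Fin N => a j ≤ a i)).card : ℝ) := by
      exact_mod_cast Finset.card_le_card hsub
    have hj : ((Finset.univ.filter (fun i : Fin N => a j ≤ a i)).card : ℝ) / N ≤ ε := by
      simpa [hB] using (Finset.mem_filter.mp hjB).2
    have hNpos : (0 : ℝ) < N := by exact_mod_cast hN
    calc (B.card : ℝ) ≤ ((Finset.univ.filter (fun i : Fin N => a j ≤ a i)).card : ℝ) := hcard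
      _ ≤ ε * N := by
          rw [div_le_iff₀ hNpos] at hj; exact hj
end

section
/- Let N be a positive natural number and a : Fin N → ℝ an injective family of real non-conformity scores (all scores distinct). Then for every natural number k ≤ N, the number of indices j with #{i : a_i ≥ a_j} ≤ k is exactly k; that is, card {j : card {i : a_i ≥ a_j} ≤ k} = k. -/
/-- Exact rank counting for distinct scores: if all `N` scores are distinct,
then for every `k ≤ N` exactly `k` indices have rank `#{i : a i ≥ a j} ≤ k`. -/
theorem rank_count_exact (N : ℕ) (hN : 0 < N) (a : Fin N → ℝ)
    (ha : Function.Injective a) (k : ℕ) (hk : k ≤ N) :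
    (Finset.univ.filter (fun j : Fin N =>
      (Finset.univ.filter (fun i : Fin N => a j ≤ a i)).card ≤ k)).card = k := by
  set r : Fin N → ℕ := fun j => (Finset.univ.filter (fun i : Fin N => a j ≤ a i)).card with hr
  have hstrict : ∀ j j' : Fin N, a j < a j' → r j' < r j := by
    intro j j' h
    apply Finset.card_lt_card
    constructor
    · intro i hi
      simp only [Finset.mem_filter, Finset.mem_univ, true_and] at hi ⊢
      exact le_trans h.le hi
    · intro hsub
      have := hsub (by simp : j ∈ Finset.univ.filter (fun i : Fin N => a j ≤ a i))
      simp only [Finset.mem_filter, Finset.mem_univ, true_and] at this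
      exact absurd this (not_le.mpr h)
  have hinj : Function.Injective r := by
    intro j j' h
    by_contra hne
    rcases lt_or_gt_of_ne (fun hh : a j = a j' => hne (ha hh)) with hlt | hgt
    · exact absurd h (Nat.ne_of_gt (hstrict _ _ hlt))
    · exact absurd h (Nat.ne_of_lt (hstrict _ _ hgt))
  have hmem : ∀ j, r j ∈ Finset.Icc 1 N := by
    intro j
    simp only [Finset.mem_Icc]
    constructor
    · have : j ∈ Finset.univ.filter (fun i : Fin N => a j ≤ a i) := by simp
      exact Finset.card_pos.mpr ⟨j, this⟩
    · calc r j ≤ (Finset.univ : Finset (Fin N)).card := Finset.card_filter_le _ _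
        _ = N := by simp
  have himg : Finset.univ.image r = Finset.Icc 1 N := by
    apply Finset.eq_of_subset_of_card_le
    · intro x hx
      rcases Finset.mem_image.mp hx with ⟨j, _, rfl⟩
      exact hmem j
    · rw [Finset.card_image_of_injective _ hinj]
      simp
  have key : (Finset.univ.filter (fun j => r j ≤ k)).card
      = ((Finset.univ.image r).filter (fun n => n ≤ k)).card := by
    rw [Finset.filter_image, Finset.card_image_of_injective _ hinj]
  rw [show (Finset.univ.filter (fun j : Fin N =>
      (Finset.univ.filter (fun i : Fin N => a j ≤ a i)).card ≤ k)) =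
      Finset.univ.filter (fun j => r j ≤ k) from rfl, key, himg]
  have : (Finset.Icc 1 N).filter (fun n => n ≤ k) = Finset.Icc 1 k := by
    ext n
    simp only [Finset.mem_filter, Finset.mem_Icc]
    omega
  rw [this]
  simp
end

section
/- Let μ be a probability measure on a measurable space Ω and let X : Ω → (Fin (n+1) → ℝ) be a measurable, exchangeable random vector of non-conformity scores such that μ-almost surely the coordinates X(ω)_1, …, X(ω)_{n+1} are pairwise distinct. Then for every k ∈ {1, …, n+1}, μ({ω : #{i : X(ω)_i ≥ X(ω)_{n+1}} = k}) = 1/(n+1); that is, the rank of the test coordinate is uniformly distributed on {1, …, n+1}. -/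
open MeasureTheory

private noncomputable def rnk (n : ℕ) (f : Fin (n + 1) → ℝ) (j : Fin (n + 1)) : ℕ :=
  (Finset.univ.filter (fun i => f j ≤ f i)).card

private lemma rnk_comp {n : ℕ} (σ : Equiv.Perm (Fin (n + 1))) (f : Fin (n + 1) → ℝ)
    (j : Fin (n + 1)) : rnk n (f ∘ σ) j = rnk n f (σ j) := by
  unfold rnk
  apply Finset.card_bij (fun i _ => σ i)
  · intro a ha; simp only [Finset.mem_filter, Finset.mem_univ, true_and,
      Function.comp_apply] at ha ⊢; exact ha
  · intro a _ b _ h; exact σ.injective h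
  · intro b hb
    refine ⟨σ.symm b, ?_, by simp⟩
    simp only [Finset.mem_filter, Finset.mem_univ, true_and, Function.comp_apply] at hb ⊢
    simpa using hb

private lemma rnk_lt {n : ℕ} {f : Fin (n + 1) → ℝ} {j j' : Fin (n + 1)}
    (hlt : f j < f j') : rnk n f j' < rnk n f j := by
  have hsub : Finset.univ.filter (fun i => f j' ≤ f i)
      ⊆ Finset.univ.filter (fun i => f j ≤ f i) := by
    intro i hi
    simp only [Finset.mem_filter, Finset.mem_univ, true_and] at hi ⊢
    exact hlt.le.trans hi
  have hss : Finset.univ.filter (fun i => f j' ≤ f i)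
      ⊂ Finset.univ.filter (fun i => f j ≤ f i) := by
    refine (Finset.ssubset_iff_of_subset hsub).mpr ⟨j, ?_, ?_⟩
    · simp
    · simp only [Finset.mem_filter, Finset.mem_univ, true_and]
      exact not_le.mpr hlt
  have := Finset.card_lt_card hss
  unfold rnk
  omega

private lemma rnk_inj {n : ℕ} {f : Fin (n + 1) → ℝ} (hf : Function.Injective f) :
    Function.Injective (rnk n f) := by
  intro j j' h
  by_contra hne
  have hfne : f j ≠ f j' := fun h' => hne (hf h')
  rcases lt_or_gt_of_ne hfne with hlt | hlt
  · exact absurd h (Nat.ne_of_gt (rnk_lt hlt))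
  · exact absurd h (Nat.ne_of_lt (rnk_lt hlt))

private lemma rnk_surj {n : ℕ} {f : Fin (n + 1) → ℝ} (hf : Function.Injective f)
    {k : ℕ} (hk1 : 1 ≤ k) (hk2 : k ≤ n + 1) : ∃ j, rnk n f j = k := by
  have himg : Finset.image (rnk n f) Finset.univ = Finset.Icc 1 (n + 1) := by
    apply Finset.eq_of_subset_of_card_le
    · intro x hx
      simp only [Finset.mem_image, Finset.mem_univ, true_and] at hx
      obtain ⟨j, rfl⟩ := hx
      simp only [Finset.mem_Icc]
      constructor
      · have hj : j ∈ Finset.univ.filter (fun i => f j ≤ f i) := by simp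
        have := Finset.card_pos.mpr ⟨j, hj⟩
        unfold rnk; omega
      · have := Finset.card_filter_le (Finset.univ : Finset (Fin (n+1))) (fun i => f j ≤ f i)
        unfold rnk
        simpa using this
    · rw [Finset.card_image_of_injective _ (rnk_inj hf)]
      simp
  have hk : k ∈ Finset.Icc 1 (n + 1) := by simp only [Finset.mem_Icc]; omega
  rw [← himg] at hk
  simpa using Finset.mem_image.mp hk

private lemma measurable_rnk {n : ℕ} (j : Fin (n + 1)) :
    Measurable (fun f : Fin (n + 1) → ℝ => rnk n f j) := by
  have heq : (fun f : Fin (n + 1) → ℝ => rnk n f j)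
      = fun f => ∑ i, if f j ≤ f i then 1 else 0 := by
    funext f; unfold rnk; rw [Finset.card_filter]
  rw [heq]
  exact Finset.measurable_sum _ fun i _ =>
    Measurable.ite (measurableSet_le (measurable_pi_apply j) (measurable_pi_apply i))
      measurable_const measurable_const

/-- For an exchangeable score vector with a.s. pairwise-distinct coordinates,
the rank of the test (last) coordinate is uniformly distributed on
`{1, …, n+1}`. -/
theorem conformal_rank_uniform
    {Ω : Type*} [MeasurableSpace Ω] (μ : Measure Ω) [IsProbabilityMeasure μ]
    (n : ℕ) (X : Ω → (Fin (n + 1) → ℝ)) (hX : Measurable X)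
    (hexch : ∀ σ : Equiv.Perm (Fin (n + 1)),
      Measure.map (fun ω => X ω ∘ σ) μ = Measure.map X μ)
    (hdistinct : ∀ᵐ ω ∂μ, Function.Injective (X ω))
    (k : ℕ) (hk1 : 1 ≤ k) (hk2 : k ≤ n + 1) :
    μ {ω | (Finset.univ.filter
        (fun i : Fin (n + 1) => X ω (Fin.last n) ≤ X ω i)).card = k}
      = (↑(n + 1))⁻¹ := by
  set rset : Fin (n + 1) → Set (Fin (n + 1) → ℝ) := fun j => {f | rnk n f j = k} with hrset
  have hrset_meas : ∀ j, MeasurableSet (rset j) :=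
    fun j => measurable_rnk j (measurableSet_singleton k)
  -- all ranks equally likely
  have hkey : ∀ j, μ (X ⁻¹' rset (Fin.last n)) = μ (X ⁻¹' rset j) := by
    intro j
    set σ := Equiv.swap j (Fin.last n) with hσ
    have hXσ : Measurable (fun ω => X ω ∘ ⇑σ) :=
      measurable_pi_iff.mpr fun i => (measurable_pi_apply (σ i)).comp hX
    have h1 : μ (X ⁻¹' rset (Fin.last n)) = Measure.map X μ (rset (Fin.last n)) :=
      (Measure.map_apply hX (hrset_meas _)).symm
    have h2 : Measure.map X μ (rset (Fin.last n))
        = μ ((fun ω => X ω ∘ ⇑σ) ⁻¹' rset (Fin.last n)) := by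
      rw [← hexch σ, Measure.map_apply hXσ (hrset_meas _)]
    have h3 : (fun ω => X ω ∘ ⇑σ) ⁻¹' rset (Fin.last n) = X ⁻¹' rset j := by
      ext ω
      simp only [Set.mem_preimage, hrset, Set.mem_setOf_eq, rnk_comp]
      rw [Equiv.swap_apply_right]
    rw [h1, h2, h3]
  -- the good set
  set G : Set Ω := X ⁻¹' {f | Function.Injective f} with hG
  have hInjMeas : MeasurableSet {f : Fin (n + 1) → ℝ | Function.Injective f} := by
    have : {f : Fin (n + 1) → ℝ | Function.Injective f}
        = ⋂ i, ⋂ j, {f : Fin (n + 1) → ℝ | f i = f j → i = j} := by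
      ext f
      simp only [Set.mem_setOf_eq, Set.mem_iInter, Function.Injective]
    rw [this]
    refine MeasurableSet.iInter fun i => MeasurableSet.iInter fun j => ?_
    by_cases hij : i = j
    · subst hij
      have : {f : Fin (n + 1) → ℝ | f i = f i → i = i} = Set.univ := by
        ext f; simp
      rw [this]; exact MeasurableSet.univ
    · have : {f : Fin (n + 1) → ℝ | f i = f j → i = j}
          = {f : Fin (n + 1) → ℝ | f i = f j}ᶜ := by
        ext f; simp [hij]
      rw [this]
      exact (measurableSet_eq_fun (measurable_pi_apply i) (measurable_pi_apply j)).compl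
  have hGmeas : MeasurableSet G := hX hInjMeas
  have hGc : μ Gᶜ = 0 := by
    have : Gᶜ = {ω | ¬ Function.Injective (X ω)} := by
      ext ω; simp [hG]
    rw [this]
    exact hdistinct
  have hGfull : μ G = 1 := by
    have h := measure_add_measure_compl (μ := μ) hGmeas
    rw [hGc, add_zero, measure_univ] at h
    exact h
  -- disjoint decomposition of G
  set B : Fin (n + 1) → Set Ω := fun j => X ⁻¹' rset j ∩ G with hB
  have hBmeas : ∀ j, MeasurableSet (B j) := fun j => (hX (hrset_meas j)).inter hGmeas
  have hBdisj : Pairwise (Function.onFun Disjoint B) := by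
    intro j j' hjj'
    refine Set.disjoint_left.mpr fun ω hω hω' => ?_
    obtain ⟨h1, h2⟩ := hω
    obtain ⟨h1', _⟩ := hω'
    have hinj : Function.Injective (X ω) := h2
    exact hjj' (rnk_inj hinj (h1.trans h1'.symm))
  have hBunion : (⋃ j, B j) = G := by
    ext ω
    simp only [Set.mem_iUnion, hB, Set.mem_inter_iff, Set.mem_preimage, hrset,
      Set.mem_setOf_eq, hG]
    constructor
    · rintro ⟨j, _, h⟩; exact h
    · intro h
      obtain ⟨j, hj⟩ := rnk_surj h hk1 hk2
      exact ⟨j, hj, h⟩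
  have hsum : ∑ j, μ (B j) = 1 := by
    rw [← tsum_fintype (L := SummationFilter.unconditional _), ← measure_iUnion hBdisj hBmeas, hBunion, hGfull]
  have hBval : ∀ j, μ (B j) = μ (X ⁻¹' rset j) := by
    intro j
    apply le_antisymm (measure_mono Set.inter_subset_left)
    calc μ (X ⁻¹' rset j) ≤ μ (B j ∪ Gᶜ) := by
          apply measure_mono
          intro ω hω
          by_cases hg : ω ∈ G
          · exact Or.inl ⟨hω, hg⟩
          · exact Or.inr hg
      _ ≤ μ (B j) + μ Gᶜ := measure_union_le _ _
      _ = μ (B j) := by rw [hGc, add_zero]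
  set c : ENNReal := μ (X ⁻¹' rset (Fin.last n)) with hc
  have hsum' : (n + 1 : ENNReal) * c = 1 := by
    have : ∑ j : Fin (n + 1), μ (B j) = ∑ j : Fin (n + 1), c := by
      apply Finset.sum_congr rfl
      intro j _
      rw [hBval j]; exact (hkey j).symm
    rw [this, Finset.sum_const, Finset.card_univ, Fintype.card_fin, nsmul_eq_mul] at hsum
    push_cast at hsum ⊢
    exact hsum
  have hfin : c = (↑(n + 1) : ENNReal)⁻¹ := by
    have hne0 : ((n : ENNReal) + 1) ≠ 0 := by
      intro h
      simp at h
    have hnetop : ((n : ENNReal) + 1) ≠ ⊤ := by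
      simp [ENNReal.add_ne_top]
    calc c = (((n : ENNReal) + 1)⁻¹ * ((n : ENNReal) + 1)) * c := by
          rw [ENNReal.inv_mul_cancel hne0 hnetop, one_mul]
      _ = ((n : ENNReal) + 1)⁻¹ * (((n : ENNReal) + 1) * c) := by ring
      _ = ((n : ENNReal) + 1)⁻¹ := by rw [hsum', mul_one]
      _ = (↑(n + 1) : ENNReal)⁻¹ := by push_cast; ring_nf
  have hgoal : {ω | (Finset.univ.filter
      (fun i : Fin (n + 1) => X ω (Fin.last n) ≤ X ω i)).card = k}
      = X ⁻¹' rset (Fin.last n) := rfl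
  rw [hgoal]
  exact hfin
end

section
/- Let μ be a probability measure on a measurable space Ω and let X : Ω → (Fin (n+1) → ℝ) be a measurable, exchangeable random vector of non-conformity scores such that μ-almost surely the coordinates X(ω)_1, …, X(ω)_{n+1} are pairwise distinct. Define the conformal p-value p(ω) = (#{i : X(ω)_i ≥ X(ω)_{n+1}}) / (n+1). Then for every k ∈ {0, 1, …, n+1}, μ({ω : p(ω) ≤ k/(n+1)}) = k/(n+1); that is, p is uniformly distributed on {1/(n+1), 2/(n+1), …, 1}. -/
open MeasureTheory ENNReal

namespace ConformalAux

variable {n : ℕ}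

/-- The rank of coordinate `j`: number of coordinates at least `x j`. -/
noncomputable def N (x : Fin (n + 1) → ℝ) (j : Fin (n + 1)) : ℕ :=
  (Finset.univ.filter (fun i => x j ≤ x i)).card

lemma N_inj {x : Fin (n + 1) → ℝ} (hx : Function.Injective x) :
    Function.Injective (N x) := by
  have key : ∀ j j' : Fin (n + 1), x j < x j' → N x j' < N x j := by
    intro j j' h
    apply Finset.card_lt_card
    constructor
    · intro i hi
      simp only [Finset.mem_filter, Finset.mem_univ, true_and] at hi ⊢
      linarith
    · intro hsub
      have := hsub (by simp : j ∈ Finset.univ.filter (fun i => x j ≤ x i))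
      simp only [Finset.mem_filter, Finset.mem_univ, true_and] at this
      linarith
  intro j j' h
  by_contra hne
  rcases lt_or_gt_of_ne (fun e => hne (hx e)) with hlt | hlt
  · have := key j j' hlt; omega
  · have := key j' j hlt; omega

lemma image_N {x : Fin (n + 1) → ℝ} (hx : Function.Injective x) :
    Finset.image (N x) Finset.univ = Finset.Icc 1 (n + 1) := by
  apply Finset.eq_of_subset_of_card_le
  · intro m hm
    simp only [Finset.mem_image, Finset.mem_univ, true_and] at hm
    obtain ⟨j, rfl⟩ := hm
    simp only [Finset.mem_Icc]
    constructor
    · have : j ∈ Finset.univ.filter (fun i => x j ≤ x i) := by simp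
      exact Finset.card_pos.mpr ⟨j, this⟩
    · calc N x j ≤ (Finset.univ : Finset (Fin (n + 1))).card :=
            Finset.card_filter_le _ _
        _ = n + 1 := by simp
  · rw [Finset.card_image_of_injective _ (N_inj hx)]
    simp [Nat.card_Icc]

lemma card_filter_N {x : Fin (n + 1) → ℝ} (hx : Function.Injective x)
    {k : ℕ} (hk : k ≤ n + 1) :
    (Finset.univ.filter (fun j => N x j ≤ k)).card = k := by
  have h1 : (Finset.univ.filter (fun j => N x j ≤ k)).card
      = ((Finset.univ.filter (fun j => N x j ≤ k)).image (N x)).card :=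
    (Finset.card_image_of_injective _ (N_inj hx)).symm
  rw [h1]
  have h2 : (Finset.univ.filter (fun j => N x j ≤ k)).image (N x)
      = (Finset.image (N x) Finset.univ).filter (fun m => m ≤ k) := by
    ext m
    simp only [Finset.mem_image, Finset.mem_filter, Finset.mem_univ, true_and]
    constructor
    · rintro ⟨j, hj, rfl⟩; exact ⟨⟨j, rfl⟩, hj⟩
    · rintro ⟨⟨j, rfl⟩, hj⟩; exact ⟨j, hj, rfl⟩
  rw [h2, image_N hx]
  have h3 : (Finset.Icc 1 (n + 1)).filter (fun m => m ≤ k) = Finset.Icc 1 k := by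
    ext m
    simp only [Finset.mem_filter, Finset.mem_Icc]
    omega
  rw [h3, Nat.card_Icc]
  omega

lemma measurable_N (j : Fin (n + 1)) : Measurable (fun x : Fin (n + 1) → ℝ => N x j) := by
  unfold N
  simp only [Finset.card_filter]
  apply Finset.measurable_sum
  intro i _
  exact Measurable.ite (measurableSet_le (measurable_pi_apply j) (measurable_pi_apply i))
    measurable_const measurable_const

lemma N_perm (x : Fin (n + 1) → ℝ) (σ : Equiv.Perm (Fin (n + 1))) (j : Fin (n + 1)) :
    N (x ∘ σ) j = N x (σ j) := by
  unfold N
  have h : (Finset.univ.filter (fun i => x (σ j) ≤ x (σ i)))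
      = (Finset.univ.filter (fun i => x (σ j) ≤ x i)).image σ.symm := by
    ext i
    simp only [Finset.mem_filter, Finset.mem_univ, true_and, Finset.mem_image]
    constructor
    · intro h; exact ⟨σ i, h, σ.symm_apply_apply i⟩
    · rintro ⟨a, ha, rfl⟩; simpa using ha
  simp only [Function.comp]
  rw [h, Finset.card_image_of_injective _ σ.symm.injective]

end ConformalAux

/-- For an exchangeable score vector with a.s. pairwise-distinct coordinates,
the conformal p-value `p = #{i : X i ≥ X (last)} / (n+1)` is uniformly
distributed on `{1/(n+1), …, 1}`: `μ {p ≤ k/(n+1)} = k/(n+1)` for all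
`k ∈ {0, …, n+1}`. -/
theorem conformal_pvalue_uniform
    {Ω : Type*} [MeasurableSpace Ω] (μ : Measure Ω) [IsProbabilityMeasure μ]
    (n : ℕ) (X : Ω → (Fin (n + 1) → ℝ)) (hX : Measurable X)
    (hexch : ∀ σ : Equiv.Perm (Fin (n + 1)),
      Measure.map (fun ω => X ω ∘ σ) μ = Measure.map X μ)
    (hdistinct : ∀ᵐ ω ∂μ, Function.Injective (X ω))
    (p : Ω → ℝ)
    (hp : ∀ ω, p ω =
      ((Finset.univ.filter (fun i : Fin (n + 1) => X ω (Fin.last n) ≤ X ω i)).card : ℝ)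
        / (n + 1))
    (k : ℕ) (hk : k ≤ n + 1) :
    μ {ω | p ω ≤ (k : ℝ) / (n + 1)} = ENNReal.ofReal ((k : ℝ) / (n + 1)) := by
  classical
  open ConformalAux in
  -- the event sets
  set B : Fin (n + 1) → Set (Fin (n + 1) → ℝ) :=
    fun j => {x | N x j ≤ k} with hB
  have hBmeas : ∀ j, MeasurableSet (B j) := fun j =>
    measurableSet_le (measurable_N j) measurable_const
  set A : Fin (n + 1) → Set Ω := fun j => X ⁻¹' (B j) with hA
  have hAmeas : ∀ j, MeasurableSet (A j) := fun j => hX (hBmeas j)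
  -- all events have the same measure
  have hsame : ∀ j, μ (A j) = μ (A (Fin.last n)) := by
    intro j
    set σ : Equiv.Perm (Fin (n + 1)) := Equiv.swap (Fin.last n) j with hσ
    have hXσ : Measurable (fun ω => X ω ∘ σ) :=
      measurable_pi_iff.mpr fun i => (measurable_pi_apply (σ i)).comp hX
    have h1 : A j = (fun ω => X ω ∘ σ) ⁻¹' (B (Fin.last n)) := by
      ext ω
      simp only [hA, hB, Set.mem_preimage, Set.mem_setOf_eq, N_perm, hσ,
        Equiv.swap_apply_left]
    calc μ (A j) = μ ((fun ω => X ω ∘ σ) ⁻¹' (B (Fin.last n))) := by rw [h1]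
      _ = Measure.map (fun ω => X ω ∘ σ) μ (B (Fin.last n)) :=
          (Measure.map_apply hXσ (hBmeas _)).symm
      _ = Measure.map X μ (B (Fin.last n)) := by rw [hexch σ]
      _ = μ (A (Fin.last n)) := Measure.map_apply hX (hBmeas _)
  -- sum of measures = k
  have hsum : ∑ j : Fin (n + 1), μ (A j) = (k : ℝ≥0∞) := by
    have h1 : ∀ j : Fin (n + 1), μ (A j)
        = ∫⁻ ω, (A j).indicator (1 : Ω → ℝ≥0∞) ω ∂μ := by
      intro j; rw [lintegral_indicator_one (hAmeas j)]
    calc ∑ j : Fin (n + 1), μ (A j)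
        = ∑ j : Fin (n + 1), ∫⁻ ω, (A j).indicator (1 : Ω → ℝ≥0∞) ω ∂μ :=
          Finset.sum_congr rfl fun j _ => h1 j
      _ = ∫⁻ ω, ∑ j : Fin (n + 1), (A j).indicator (1 : Ω → ℝ≥0∞) ω ∂μ :=
          (lintegral_finset_sum _ fun j _ =>
            (measurable_const.indicator (hAmeas j))).symm
      _ = ∫⁻ _, (k : ℝ≥0∞) ∂μ := by
          apply lintegral_congr_ae
          filter_upwards [hdistinct] with ω hω
          have : ∑ j : Fin (n + 1), (A j).indicator (1 : Ω → ℝ≥0∞) ω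
              = ((Finset.univ.filter (fun j => N (X ω) j ≤ k)).card : ℝ≥0∞) := by
            rw [Finset.card_filter]
            push_cast
            apply Finset.sum_congr rfl
            intro j _
            by_cases h : N (X ω) j ≤ k
            · simp [Set.indicator_apply, hA, hB, h]
            · simp [Set.indicator_apply, hA, hB, h]
          rw [this, card_filter_N hω hk]
      _ = (k : ℝ≥0∞) := by simp
  have hsum2 : ((n : ℝ≥0∞) + 1) * μ (A (Fin.last n)) = (k : ℝ≥0∞) := by
    calc ((n : ℝ≥0∞) + 1) * μ (A (Fin.last n))
        = ∑ _j : Fin (n + 1), μ (A (Fin.last n)) := by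
          rw [Finset.sum_const]
          simp [nsmul_eq_mul]
      _ = ∑ j : Fin (n + 1), μ (A j) := Finset.sum_congr rfl fun j _ => (hsame j).symm
      _ = (k : ℝ≥0∞) := hsum
  have hne : ((n : ℝ≥0∞) + 1) ≠ 0 := by simp
  have hnetop : ((n : ℝ≥0∞) + 1) ≠ ⊤ := by simp
  have hmeas : μ (A (Fin.last n)) = (k : ℝ≥0∞) / ((n : ℝ≥0∞) + 1) :=
    ENNReal.eq_div_iff hne hnetop |>.mpr hsum2
  -- identify the target set
  have hset : {ω | p ω ≤ (k : ℝ) / (n + 1)} = A (Fin.last n) := by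
    ext ω
    simp only [Set.mem_setOf_eq, hA, hB, Set.mem_preimage]
    rw [hp ω]
    have hpos : (0 : ℝ) < (n : ℝ) + 1 := by positivity
    rw [div_le_div_iff_of_pos_right hpos]
    exact_mod_cast Iff.rfl
  rw [hset, hmeas]
  rw [ENNReal.ofReal_div_of_pos (by positivity)]
  congr 1
  · exact (ENNReal.ofReal_natCast k).symm ▸ rfl
  · rw [ENNReal.ofReal_add (by positivity) zero_le_one]
    simp
end

section
/- Let μ be a probability measure on a measurable space Ω, let E ⊆ Ω be a measurable event with μ(E) > 0, and let X : Ω → (Fin (n+1) → ℝ) be a measurable random vector of non-conformity scores that is exchangeable under the conditional probability measure μ(· | E), i.e., for every permutation σ of Fin (n+1), the law of ω ↦ X(ω) ∘ σ under μ(· | E) equals the law of X under μ(· | E). Define the conformal p-value p(ω) = (#{i : X(ω)_i ≥ X(ω)_{n+1}}) / (n+1). Then for every ε ∈ [0,1], μ({ω : p(ω) ≤ ε} | E) ≤ ε. (Label-conditional validity of Mondrian Inductive Conformal Prediction: taking E to be the event that the test sample's true label equals y, errors on class y occur with conditional probability at most ε.) -/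
open MeasureTheory ProbabilityTheory
open scoped ENNReal

lemma rank_count_le {N : ℕ} (x : Fin N → ℝ) (k : ℕ) :
    (Finset.univ.filter (fun j =>
      (Finset.univ.filter (fun i => x j ≤ x i)).card ≤ k)).card ≤ k := by
  set S := Finset.univ.filter (fun j =>
      (Finset.univ.filter (fun i => x j ≤ x i)).card ≤ k) with hS
  rcases S.eq_empty_or_nonempty with h | h
  · simp [h]
  · obtain ⟨j0, hj0, hmin⟩ := S.exists_min_image x h
    have hsub : S ⊆ Finset.univ.filter (fun i => x j0 ≤ x i) := by
      intro j hj
      simp only [Finset.mem_filter, Finset.mem_univ, true_and]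
      exact hmin j hj
    have hj0' : (Finset.univ.filter (fun i => x j0 ≤ x i)).card ≤ k := by
      rw [hS, Finset.mem_filter] at hj0; exact hj0.2
    exact le_trans (Finset.card_le_card hsub) hj0'

/-- Label-conditional validity of Mondrian Inductive Conformal Prediction:
if the score vector is exchangeable under the conditional measure `μ[|E]`
(e.g. `E` = the event that the test sample's true label is `y`), then the
conformal p-value is conditionally superuniform: `μ({p ≤ ε} | E) ≤ ε`. -/
theorem mondrian_conditional_validity
    {Ω : Type*} [MeasurableSpace Ω] (μ : Measure Ω) [IsProbabilityMeasure μ]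
    (E : Set Ω) (hE : MeasurableSet E) (hEpos : 0 < μ E)
    (n : ℕ) (X : Ω → (Fin (n + 1) → ℝ)) (hX : Measurable X)
    (hexch : ∀ σ : Equiv.Perm (Fin (n + 1)),
      Measure.map (fun ω => X ω ∘ σ) (μ[|E]) = Measure.map X (μ[|E]))
    (p : Ω → ℝ)
    (hp : ∀ ω, p ω =
      ((Finset.univ.filter (fun i : Fin (n + 1) => X ω (Fin.last n) ≤ X ω i)).card : ℝ)
        / (n + 1))
    (ε : ℝ) (hε0 : 0 ≤ ε) (hε1 : ε ≤ 1) :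
    μ[|E] {ω | p ω ≤ ε} ≤ ENNReal.ofReal ε := by
  classical
  haveI : IsProbabilityMeasure (μ[|E]) :=
    cond_isProbabilityMeasure hEpos.ne'
  set μ' := μ[|E] with hμ'
  set k : ℕ := ⌊ε * (n + 1)⌋₊ with hk
  set c : (Fin (n + 1) → ℝ) → ℕ := fun x =>
    (Finset.univ.filter (fun i => x (Fin.last n) ≤ x i)).card with hc
  set A : Set (Fin (n + 1) → ℝ) := {x | c x ≤ k} with hA
  -- measurability of c and A
  have hcm : Measurable c := by
    have : c = fun x => ∑ i : Fin (n + 1), if x (Fin.last n) ≤ x i then 1 else 0 := by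
      funext x
      exact Finset.card_filter _ _
    rw [this]
    exact Finset.measurable_sum _ (fun i _ =>
      Measurable.ite (measurableSet_le (measurable_pi_apply _) (measurable_pi_apply _))
        measurable_const measurable_const)
  have hAm : MeasurableSet A := hcm measurableSet_Iic
  -- rewrite the event
  have hev : {ω | p ω ≤ ε} = X ⁻¹' A := by
    ext ω
    have hpos : (0:ℝ) < (n:ℝ) + 1 := by positivity
    simp only [Set.mem_setOf_eq, Set.mem_preimage, hA, hc, Set.mem_setOf_eq, hp ω, hk]
    rw [div_le_iff₀ hpos, Nat.le_floor_iff (by positivity)]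
  set ν := Measure.map X μ' with hν
  haveI : IsProbabilityMeasure ν := Measure.isProbabilityMeasure_map hX.aemeasurable
  -- permutation invariance
  set τ : Fin (n + 1) → Equiv.Perm (Fin (n + 1)) := fun j => Equiv.swap j (Fin.last n)
    with hτ
  have hcomp : ∀ σ : Equiv.Perm (Fin (n + 1)),
      Measurable (fun y : Fin (n + 1) → ℝ => y ∘ σ) := fun σ =>
    measurable_pi_lambda _ (fun i => measurable_pi_apply _)
  set B : Fin (n + 1) → Set (Fin (n + 1) → ℝ) :=
    fun j => (fun y : Fin (n + 1) → ℝ => y ∘ (τ j)) ⁻¹' A with hB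
  have hBm : ∀ j, MeasurableSet (B j) := fun j => (hcomp (τ j)) hAm
  have hBeq : ∀ j, ν (B j) = ν A := by
    intro j
    have hXτ : Measurable (fun ω => X ω ∘ (τ j)) :=
      measurable_pi_lambda _ (fun i => (measurable_pi_apply _).comp hX)
    have h1 : ν (B j) = Measure.map (fun ω => X ω ∘ (τ j)) μ' A := by
      rw [hν, Measure.map_apply hX (hBm j), Measure.map_apply hXτ hAm]
      rfl
    rw [h1, hexch (τ j)]
  -- membership characterization
  have hBmem : ∀ (y : Fin (n + 1) → ℝ) (j : Fin (n + 1)),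
      y ∈ B j ↔ (Finset.univ.filter (fun i => y j ≤ y i)).card ≤ k := by
    intro y j
    have hcard : c (y ∘ (τ j)) = (Finset.univ.filter (fun i => y j ≤ y i)).card := by
      simp only [hc, Function.comp_apply]
      have hlast : (τ j) (Fin.last n) = j := Equiv.swap_apply_right _ _
      simp only [hlast]
      exact Finset.card_equiv (τ j) (by intro i; simp)
    simp only [hB, Set.mem_preimage, hA, Set.mem_setOf_eq, hcard]
  -- pointwise bound on the sum of indicators
  have hpt : ∀ y : Fin (n + 1) → ℝ,
      ∑ j : Fin (n + 1), (B j).indicator (1 : (Fin (n+1) → ℝ) → ℝ≥0∞) y ≤ (k : ℝ≥0∞) := by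
    intro y
    have : ∑ j : Fin (n + 1), (B j).indicator (1 : (Fin (n+1) → ℝ) → ℝ≥0∞) y
        = ((Finset.univ.filter (fun j : Fin (n+1) => y ∈ B j)).card : ℝ≥0∞) := by
      rw [Finset.card_filter]
      push_cast
      refine Finset.sum_congr rfl (fun j _ => ?_)
      by_cases h : y ∈ B j <;> simp [h, Set.indicator]
    rw [this]
    have h2 : (Finset.univ.filter (fun j : Fin (n+1) => y ∈ B j)).card ≤ k := by
      have : (Finset.univ.filter (fun j : Fin (n+1) => y ∈ B j))
          = (Finset.univ.filter (fun j =>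
              (Finset.univ.filter (fun i => y j ≤ y i)).card ≤ k)) := by
        apply Finset.filter_congr; intro j _; simp [hBmem y j]
      rw [this]
      exact rank_count_le y k
    exact_mod_cast Nat.cast_le.mpr h2
  -- sum over permutations
  have hsum : (n + 1 : ℝ≥0∞) * ν A ≤ (k : ℝ≥0∞) := by
    have h1 : ∑ j : Fin (n + 1), ν (B j) = (n + 1 : ℝ≥0∞) * ν A := by
      rw [Finset.sum_congr rfl (fun j _ => hBeq j)]
      simp [Finset.sum_const, mul_comm]
    have h2 : ∑ j : Fin (n + 1), ν (B j)
        = ∫⁻ y, ∑ j : Fin (n + 1), (B j).indicator 1 y ∂ν := by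
      rw [lintegral_finset_sum _ (fun j _ => (measurable_one.indicator (hBm j)))]
      exact Finset.sum_congr rfl (fun j _ => (lintegral_indicator_one (hBm j)).symm)
    calc (n + 1 : ℝ≥0∞) * ν A = ∫⁻ y, ∑ j : Fin (n + 1), (B j).indicator 1 y ∂ν := by
          rw [← h1, h2]
      _ ≤ ∫⁻ _, (k : ℝ≥0∞) ∂ν := lintegral_mono hpt
      _ = (k : ℝ≥0∞) := by simp
  -- conclude
  have hkε : (k : ℝ≥0∞) ≤ ENNReal.ofReal ε * ((n : ℝ≥0∞) + 1) := by
    have h1 : (k : ℝ) ≤ ε * ((n : ℝ) + 1) := Nat.floor_le (by positivity)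
    calc (k : ℝ≥0∞) = ENNReal.ofReal (k : ℝ) := by simp
      _ ≤ ENNReal.ofReal (ε * ((n : ℝ) + 1)) := ENNReal.ofReal_le_ofReal h1
      _ = ENNReal.ofReal ε * ENNReal.ofReal ((n : ℝ) + 1) := ENNReal.ofReal_mul hε0
      _ = ENNReal.ofReal ε * ((n : ℝ≥0∞) + 1) := by
          rw [ENNReal.ofReal_add (by positivity) zero_le_one]
          simp
  have hc0 : ((n : ℝ≥0∞) + 1) ≠ 0 := by
    simp
  have hctop : ((n : ℝ≥0∞) + 1) ≠ ⊤ := by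
    simp [ENNReal.add_eq_top]
  have hfin : ν A ≤ ENNReal.ofReal ε := by
    have h := le_trans hsum hkε
    rw [mul_comm ((n : ℝ≥0∞) + 1) (ν A)] at h
    rw [mul_comm (ENNReal.ofReal ε) _] at h
    rw [mul_comm (ν A) _] at h
    exact (ENNReal.mul_le_mul_iff_right hc0 hctop).mp h
  rw [hev, ← Measure.map_apply hX hAm, ← hν]
  exact hfin
end
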